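/- For the Lie algebra W₃ ([e₃,e₄]=e₂, [e₃,e₅]=e₁, [e₄,e₅]=e₃) and the cochains δ¹, δ², δ³ given by δ¹ = -ψ^{23}₁+ψ^{35}₁-ψ^{24}₃+ψ^{45}₃+ψ^{34}₅, δ² = ψ^{23}₂-ψ^{35}₂-ψ^{25}₃+ψ^{35}₅, δ³ = ψ^{13}₂-ψ^{15}₃-ψ^{35}₄, the deformation d∞ = d + t₁δ¹ + t₂δ² + t₃δ³ + t₁t₃(-ψ^{15}₃-ψ^{35}₄-ψ^{12}₃+ψ^{23}₄+ψ^{13}₅) satisfies [d∞,d∞] = 0 (i.e., the Jacobi identity holds) for all values of the parameters t₁, t₂, t₃. -/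
import Mathlib


/-- `d = ψ³⁴₂ + ψ³⁵₁ + ψ⁴⁵₃`, the bracket of `W₃`. -/
def w3d (x y : Fin 5 → ℂ) : Fin 5 → ℂ :=
  ![x 2 * y 4 - x 4 * y 2, x 2 * y 3 - x 3 * y 2, x 3 * y 4 - x 4 * y 3, 0, 0]

/-- `δ¹ = -ψ²³₁ + ψ³⁵₁ - ψ²⁴₃ + ψ⁴⁵₃ + ψ³⁴₅`. -/
def w3delta1 (x y : Fin 5 → ℂ) : Fin 5 → ℂ :=
  ![-(x 1 * y 2 - x 2 * y 1) + (x 2 * y 4 - x 4 * y 2), 0,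
    -(x 1 * y 3 - x 3 * y 1) + (x 3 * y 4 - x 4 * y 3), 0,
    x 2 * y 3 - x 3 * y 2]

/-- `δ² = ψ²³₂ - ψ³⁵₂ - ψ²⁵₃ + ψ³⁵₅`. -/
def w3delta2 (x y : Fin 5 → ℂ) : Fin 5 → ℂ :=
  ![0, (x 1 * y 2 - x 2 * y 1) - (x 2 * y 4 - x 4 * y 2),
    -(x 1 * y 4 - x 4 * y 1), 0, x 2 * y 4 - x 4 * y 2]

/-- `δ³ = ψ¹³₂ - ψ¹⁵₃ - ψ³⁵₄`. -/
def w3delta3 (x y : Fin 5 → ℂ) : Fin 5 → ℂ :=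
  ![0, x 0 * y 2 - x 2 * y 0, -(x 0 * y 4 - x 4 * y 0),
    -(x 2 * y 4 - x 4 * y 2), 0]

/-- `μ = -ψ¹⁵₃ - ψ³⁵₄ - ψ¹²₃ + ψ²³₄ + ψ¹³₅`, the higher-order term. -/
def w3mu (x y : Fin 5 → ℂ) : Fin 5 → ℂ :=
  ![0, 0, -(x 0 * y 4 - x 4 * y 0) - (x 0 * y 1 - x 1 * y 0),
    -(x 2 * y 4 - x 4 * y 2) + (x 1 * y 2 - x 2 * y 1),
    x 0 * y 2 - x 2 * y 0]

/-- The versal deformation `d∞ = d + t₁δ¹ + t₂δ² + t₃δ³ + t₁t₃μ`. -/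
def w3dInf (t₁ t₂ t₃ : ℂ) (x y : Fin 5 → ℂ) : Fin 5 → ℂ :=
  w3d x y + t₁ • w3delta1 x y + t₂ • w3delta2 x y + t₃ • w3delta3 x y +
    (t₁ * t₃) • w3mu x y

lemma w3dInf_apply (t₁ t₂ t₃ : ℂ) (x y : Fin 5 → ℂ) :
    w3dInf t₁ t₂ t₃ x y =
    ![(x 2*y 4 - x 4*y 2) + t₁*(-(x 1*y 2 - x 2*y 1) + (x 2*y 4 - x 4*y 2)),
      (x 2*y 3 - x 3*y 2) + t₂*((x 1*y 2 - x 2*y 1) - (x 2*y 4 - x 4*y 2))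
        + t₃*(x 0*y 2 - x 2*y 0),
      (x 3*y 4 - x 4*y 3) + t₁*(-(x 1*y 3 - x 3*y 1) + (x 3*y 4 - x 4*y 3))
        + t₂*(-(x 1*y 4 - x 4*y 1)) + t₃*(-(x 0*y 4 - x 4*y 0))
        + t₁*t₃*(-(x 0*y 4 - x 4*y 0) - (x 0*y 1 - x 1*y 0)),
      t₃*(-(x 2*y 4 - x 4*y 2)) + t₁*t₃*(-(x 2*y 4 - x 4*y 2) + (x 1*y 2 - x 2*y 1)),
      t₁*(x 2*y 3 - x 3*y 2) + t₂*(x 2*y 4 - x 4*y 2) + t₁*t₃*(x 0*y 2 - x 2*y 0)] := by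
  funext i
  fin_cases i <;>
    simp [w3dInf, w3d, w3delta1, w3delta2, w3delta3, w3mu]

set_option maxHeartbeats 1600000 in
/-- `d∞` satisfies the Jacobi identity for all parameter
values `t₁, t₂, t₃`. -/
theorem stmt_16 (t₁ t₂ t₃ : ℂ) :
    ∀ x y z : Fin 5 → ℂ,
      w3dInf t₁ t₂ t₃ (w3dInf t₁ t₂ t₃ x y) z +
        w3dInf t₁ t₂ t₃ (w3dInf t₁ t₂ t₃ y z) x +
        w3dInf t₁ t₂ t₃ (w3dInf t₁ t₂ t₃ z x) y = 0 := by
  intro x y z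
  rw [w3dInf_apply t₁ t₂ t₃ x y, w3dInf_apply t₁ t₂ t₃ y z,
    w3dInf_apply t₁ t₂ t₃ z x, w3dInf_apply, w3dInf_apply, w3dInf_apply]
  funext i
  fin_cases i <;>
  · rw [Pi.add_apply, Pi.add_apply, Pi.zero_apply]
    simp only [Fin.zero_eta, Fin.mk_one, Fin.isValue, show (⟨2,by norm_num⟩ : Fin 5) = 2 from rfl,
      show (⟨3,by norm_num⟩ : Fin 5) = 3 from rfl, show (⟨4,by norm_num⟩ : Fin 5) = 4 from rfl,
      Matrix.cons_val_zero, Matrix.cons_val_one, Matrix.head_cons,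
      Matrix.cons_val_two, Matrix.tail_cons, Matrix.cons_val_three,
      Matrix.cons_val_four]
    ring
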